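/- arXiv:1912.00302 — 5 statements merged into one kernel-verified Lean document; each statement's English description precedes it below -/
import Mathlib

section
/- Let γ: [a,b] → G be a C² regular curve in the affine group and t a point with ω(γ̇(t)) = γ̇₂/γ₁ − γ̇₃ ≠ 0. Then the Riemannian curvature k^L_γ of γ with respect to g_L satisfies lim_{L→∞} k^L_γ(t) = √(γ̇₁² + γ̇₂²) / (|γ₁| · |ω(γ̇(t))|). -/
open Filter

/-! As `L → ∞` we have `‖γ̇‖²_L ~ L ω²`, `‖∇^L_{γ̇}γ̇‖²_L ~ L² ω² (γ̇₁² + γ̇₂²)/γ₁²` while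
`⟨∇^L_{γ̇}γ̇, γ̇⟩_L = O(L)`. Hence the second term under the root is `O(L⁻¹)` and the first tends
to `(γ̇₁² + γ̇₂²)/(γ₁² ω²)`. Both limits follow by substituting `x = L⁻¹`, which turns each term
into a rational function of `x` whose denominator does not vanish at `x = 0`. -/

section LargeParameter

variable (a b : ℝ) {c : ℝ} (A₀ A₁ B₀ B₁ C : ℝ)

theorem tendsto_normSq_div_sq_atTop (hc : c ≠ 0) :
    Tendsto (fun L : ℝ => ((A₀ + L * A₁) ^ 2 + (B₀ + L * B₁) ^ 2 + L * C ^ 2)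
        / (a ^ 2 + b ^ 2 + L * c ^ 2) ^ 2) atTop (nhds ((A₁ ^ 2 + B₁ ^ 2) / c ^ 4)) := by
  have hcont : ContinuousAt (fun x : ℝ => ((A₀ * x + A₁) ^ 2 + (B₀ * x + B₁) ^ 2 + x * C ^ 2)
      / ((a ^ 2 + b ^ 2) * x + c ^ 2) ^ 2) 0 :=
    ContinuousAt.div (by fun_prop) (by fun_prop) (by simp [hc])
  convert (hcont.tendsto.comp tendsto_inv_atTop_zero).congr' ?_ using 2
  · ring
  filter_upwards [eventually_gt_atTop 0] with L hL
  simp only [Function.comp_apply]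
  field_simp

theorem tendsto_inner_sq_div_cube_atTop (hc : c ≠ 0) :
    Tendsto (fun L : ℝ => ((A₀ + L * A₁) * a + (B₀ + L * B₁) * b + L * C * c) ^ 2
        / (a ^ 2 + b ^ 2 + L * c ^ 2) ^ 3) atTop (nhds 0) := by
  have hcont : ContinuousAt (fun x : ℝ => x * ((A₀ * x + A₁) * a + (B₀ * x + B₁) * b + C * c) ^ 2
      / ((a ^ 2 + b ^ 2) * x + c ^ 2) ^ 3) 0 :=
    ContinuousAt.div (by fun_prop) (by fun_prop) (by simp [hc])
  convert (hcont.tendsto.comp tendsto_inv_atTop_zero).congr' ?_ using 2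
  · simp
  filter_upwards [eventually_gt_atTop 0] with L hL
  simp only [Function.comp_apply]
  field_simp

end LargeParameter

theorem affine_curvature_limit_nonhorizontal_general
    (g1 d1 d2 dd1 dd3 w : ℝ)
    (hw0 : w ≠ 0)
    (a b : ℝ)
    (A B : ℝ → ℝ) (C : ℝ)
    (hA : ∀ L : ℝ, A L = (dd1 * g1 - d1 ^ 2) / g1 ^ 2 + L * w * (d2 / g1))
    (hB : ∀ L : ℝ, B L = dd3 - L * w * (d1 / g1)) :
    Tendsto (fun L : ℝ =>
        Real.sqrt ((A L ^ 2 + B L ^ 2 + L * C ^ 2) / (a ^ 2 + b ^ 2 + L * w ^ 2) ^ 2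
          - (A L * a + B L * b + L * C * w) ^ 2 / (a ^ 2 + b ^ 2 + L * w ^ 2) ^ 3))
      atTop (nhds (Real.sqrt (d1 ^ 2 + d2 ^ 2) / (|g1| * |w|))) := by
  set A₀ := (dd1 * g1 - d1 ^ 2) / g1 ^ 2
  set A₁ := w * (d2 / g1)
  set B₁ := -(w * (d1 / g1))
  have hA' : A = fun L => A₀ + L * A₁ := funext fun L => by rw [hA, mul_assoc]
  have hB' : B = fun L => dd3 + L * B₁ := funext fun L => by rw [hB]; ring
  subst hA' hB'
  have hlim := (tendsto_normSq_div_sq_atTop a b A₀ A₁ dd3 B₁ C hw0).sub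
    (tendsto_inner_sq_div_cube_atTop a b A₀ A₁ dd3 B₁ C hw0)
  have hvalue : (A₁ ^ 2 + B₁ ^ 2) / w ^ 4 - 0 = (d1 ^ 2 + d2 ^ 2) / (g1 * w) ^ 2 := by
    simp only [A₁, B₁, div_eq_mul_inv]
    field_simp
    ring
  rw [hvalue] at hlim
  rw [← abs_mul, ← Real.sqrt_sq_eq_abs, ← Real.sqrt_div' _ (sq_nonneg _)]
  exact (Real.continuous_sqrt.tendsto _).comp hlim

/-- Lemma 2.6 (2.13) of the paper.  Let `γ` be a `C²` regular curve in the affine group,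
with data at a fixed point `t`: `g1 = γ₁(t) > 0`, first derivatives `d1, d2, d3`, second
derivatives `dd1, dd3`, `w = ω(γ̇(t)) = d2/g1 - d3 ≠ 0` and `w' = (d/dt)ω(γ̇(t))`.
With frame components `a = d1/g1`, `b = d3`, `c = w` of `γ̇` and components
`A L, B L, C` of `∇^L_{γ̇}γ̇`, the Riemannian curvature
`k^L_γ = √(‖∇^L_{γ̇}γ̇‖²/‖γ̇‖⁴ - ⟨∇^L_{γ̇}γ̇,γ̇⟩²/‖γ̇‖⁶)` (with
`‖aX1+bX2+cX3‖² = a² + b² + Lc²`) satisfies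
`lim_{L→∞} k^L_γ = √(d1² + d2²)/(|g1|·|w|)`. -/
theorem affine_curvature_limit_nonhorizontal
    (g1 d1 d2 d3 dd1 dd3 w w' : ℝ)
    (hg1 : 0 < g1)
    (hw : w = d2 / g1 - d3)
    (hreg : ¬(d1 = 0 ∧ d2 = 0 ∧ d3 = 0))
    (hw0 : w ≠ 0)
    (a b : ℝ) (ha : a = d1 / g1) (hb : b = d3)
    (A B : ℝ → ℝ) (C : ℝ)
    (hA : ∀ L : ℝ, A L = (dd1 * g1 - d1 ^ 2) / g1 ^ 2 + L * w * (d2 / g1))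
    (hB : ∀ L : ℝ, B L = dd3 - L * w * (d1 / g1))
    (hC : C = w' - w * (d1 / g1)) :
    Tendsto (fun L : ℝ =>
        Real.sqrt ((A L ^ 2 + B L ^ 2 + L * C ^ 2) / (a ^ 2 + b ^ 2 + L * w ^ 2) ^ 2
          - (A L * a + B L * b + L * C * w) ^ 2 / (a ^ 2 + b ^ 2 + L * w ^ 2) ^ 3))
      atTop (nhds (Real.sqrt (d1 ^ 2 + d2 ^ 2) / (|g1| * |w|))) :=
  affine_curvature_limit_nonhorizontal_general g1 d1 d2 dd1 dd3 w hw0 a b A B C hA hB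
end

section
/- Let γ be a C² regular curve in the affine group with ω(γ̇(t)) = 0 and d/dt(ω(γ̇(t))) ≠ 0 at a point t. Then lim_{L→∞} k^L_γ(t)/√L = |d/dt(ω(γ̇(t)))| / ((γ̇₁/γ₁)² + γ̇₃²). -/
open Filter Topology

theorem Real.tendsto_sqrt_add_mul_div_sqrt_atTop (K c : ℝ) :
    Tendsto (fun L : ℝ => √(K + L * c) / √L) atTop (𝓝 √c) := by
  have hlim : Tendsto (fun L : ℝ => √(K / L + c)) atTop (𝓝 √c) := by
    simpa using ((tendsto_const_nhds.div_atTop tendsto_id).add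
      (tendsto_const_nhds (x := c))).sqrt
  refine hlim.congr' ?_
  filter_upwards [eventually_gt_atTop 0] with L hL
  rw [← Real.sqrt_div' _ hL.le]
  congr 1
  field_simp

theorem affine_curvature_limit_horizontal_general
    (g1 d1 d2 d3 dd1 dd3 w w' : ℝ)
    (hw0 : w = 0)
    (a b : ℝ) (ha : a = d1 / g1) (hb : b = d3)
    (A B : ℝ → ℝ) (C : ℝ)
    (hA : ∀ L : ℝ, A L = (dd1 * g1 - d1 ^ 2) / g1 ^ 2 + L * w * (d2 / g1))
    (hB : ∀ L : ℝ, B L = dd3 - L * w * (d1 / g1))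
    (hC : C = w' - w * (d1 / g1)) :
    Tendsto (fun L : ℝ =>
        Real.sqrt ((A L ^ 2 + B L ^ 2 + L * C ^ 2) / (a ^ 2 + b ^ 2 + L * w ^ 2) ^ 2
          - (A L * a + B L * b + L * C * w) ^ 2 / (a ^ 2 + b ^ 2 + L * w ^ 2) ^ 3)
        / Real.sqrt L)
      atTop (nhds (|w'| / ((d1 / g1) ^ 2 + d3 ^ 2))) := by
  subst w a b C
  set Q := (d1 / g1) ^ 2 + d3 ^ 2
  set A₀ := (dd1 * g1 - d1 ^ 2) / g1 ^ 2
  -- For horizontal `γ̇` the acceleration does not depend on `L`, so the squared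
  -- curvature is affine in `L` and only its slope survives the division by `√L`.
  have hsplit : ∀ L : ℝ,
      (A L ^ 2 + B L ^ 2 + L * (w' - 0 * (d1 / g1)) ^ 2) / (Q + L * 0 ^ 2) ^ 2
          - (A L * (d1 / g1) + B L * d3 + L * (w' - 0 * (d1 / g1)) * 0) ^ 2
            / (Q + L * 0 ^ 2) ^ 3
        = ((A₀ ^ 2 + dd3 ^ 2) / Q ^ 2 - (A₀ * (d1 / g1) + dd3 * d3) ^ 2 / Q ^ 3)
          + L * (w' ^ 2 / Q ^ 2) := by
    intro L
    rw [hA, hB]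
    ring
  have hsqrt : √(w' ^ 2 / Q ^ 2) = |w'| / Q := by
    rw [← div_pow, Real.sqrt_sq_eq_abs, abs_div, abs_of_nonneg (show 0 ≤ Q by positivity)]
  simp only [hsplit, ← hsqrt]
  exact Real.tendsto_sqrt_add_mul_div_sqrt_atTop _ _

/-- Lemma 2.6 (2.15) of the paper.  Let `γ` be a `C²` regular curve in the affine group
with, at a fixed point `t`, `ω(γ̇(t)) = d2/g1 - d3 = 0` and `w' = (d/dt)ω(γ̇(t)) ≠ 0`.
Then `lim_{L→∞} k^L_γ/√L = |w'| / ((d1/g1)² + d3²)`. -/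
theorem affine_curvature_limit_horizontal
    (g1 d1 d2 d3 dd1 dd3 w w' : ℝ)
    (hg1 : 0 < g1)
    (hw : w = d2 / g1 - d3)
    (hreg : ¬(d1 = 0 ∧ d2 = 0 ∧ d3 = 0))
    (hw0 : w = 0) (hw' : w' ≠ 0)
    (a b : ℝ) (ha : a = d1 / g1) (hb : b = d3)
    (A B : ℝ → ℝ) (C : ℝ)
    (hA : ∀ L : ℝ, A L = (dd1 * g1 - d1 ^ 2) / g1 ^ 2 + L * w * (d2 / g1))
    (hB : ∀ L : ℝ, B L = dd3 - L * w * (d1 / g1))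
    (hC : C = w' - w * (d1 / g1)) :
    Tendsto (fun L : ℝ =>
        Real.sqrt ((A L ^ 2 + B L ^ 2 + L * C ^ 2) / (a ^ 2 + b ^ 2 + L * w ^ 2) ^ 2
          - (A L * a + B L * b + L * C * w) ^ 2 / (a ^ 2 + b ^ 2 + L * w ^ 2) ^ 3)
        / Real.sqrt L)
      atTop (nhds (|w'| / ((d1 / g1) ^ 2 + d3 ^ 2))) :=
  affine_curvature_limit_horizontal_general g1 d1 d2 d3 dd1 dd3 w w' hw0 a b ha hb A B C hA hB hC
end

section
/- Let γ be a C² regular curve in E(1,1) with ω(γ̇(t)) = −(√2/2)(e^{−γ₃}γ̇₁ + e^{γ₃}γ̇₂) ≠ 0 at a point t. Then the curvature k^L_γ with respect to g_L satisfies lim_{L→∞} k^L_γ(t) = √((1/2)(−e^{−γ₃}γ̇₁ + e^{γ₃}γ̇₂)² + γ̇₃²) / |ω(γ̇(t))|. -/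
open Filter Topology

/-! As `L → ∞` the `X₁`, `X₂` components of `∇^L_{γ̇}γ̇` grow linearly in `L` while its `X₃`
component stays bounded, and `‖γ̇‖²_L ∼ L ω(γ̇)²`. Hence `‖∇^L_{γ̇}γ̇‖²_L / ‖γ̇‖⁴_L` tends to the
ratio of the leading coefficients, while `⟨∇^L_{γ̇}γ̇, γ̇⟩²_L / ‖γ̇‖⁶_L = O(L² / L³)` vanishes.
Substituting `u = 1/L` turns the squared curvature into a rational function continuous at `0`. -/

def normSqL (L a b c : ℝ) : ℝ := a ^ 2 + b ^ 2 + L * c ^ 2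

def innerL (L a b c A B C : ℝ) : ℝ := A * a + B * b + L * C * c

/-- `(k^L)²` of a curve with velocity `aX₁ + bX₂ + cX₃` and acceleration `AX₁ + BX₂ + CX₃`. -/
noncomputable def curvatureSq (L a b c A B C : ℝ) : ℝ :=
  normSqL L A B C / normSqL L a b c ^ 2 - innerL L a b c A B C ^ 2 / normSqL L a b c ^ 3

theorem tendsto_curvatureSq_atTop {a b c : ℝ} (hc : c ≠ 0) (α₀ α₁ β₀ β₁ γ₀ γ₁ : ℝ) :
    Tendsto (fun L => curvatureSq L a b c (α₀ + α₁ * L) (β₀ + β₁ * L) (γ₀ + γ₁ * L⁻¹))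
      atTop (𝓝 ((α₁ ^ 2 + β₁ ^ 2) / c ^ 4)) := by
  have hD : ∀ u, 0 ≤ u → (a ^ 2 + b ^ 2) * u + c ^ 2 ≠ 0 := fun u hu => by positivity
  set R : ℝ → ℝ := fun u =>
    ((α₀ * u + α₁) ^ 2 + (β₀ * u + β₁) ^ 2 + u * (γ₀ + γ₁ * u) ^ 2)
        / ((a ^ 2 + b ^ 2) * u + c ^ 2) ^ 2
      - u * ((α₀ * a + β₀ * b + γ₁ * c) * u + (α₁ * a + β₁ * b + γ₀ * c)) ^ 2
        / ((a ^ 2 + b ^ 2) * u + c ^ 2) ^ 3 with hR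
  have hR_cont : ContinuousAt R 0 := by
    fun_prop (disch := simpa using hD 0 le_rfl)
  have hR_zero : R 0 = (α₁ ^ 2 + β₁ ^ 2) / c ^ 4 := by
    simp only [hR]; field_simp; ring
  have hR_inv : ∀ᶠ L in atTop,
      R L⁻¹ = curvatureSq L a b c (α₀ + α₁ * L) (β₀ + β₁ * L) (γ₀ + γ₁ * L⁻¹) := by
    filter_upwards [eventually_gt_atTop 0] with L hL
    have := hD L⁻¹ (by positivity)
    simp only [hR, curvatureSq, normSqL, innerL]
    field_simp
    ring
  rw [← hR_zero]
  exact (hR_cont.tendsto.comp tendsto_inv_atTop_zero).congr' hR_inv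

/-- Here `g3 = γ₃(t)`, `dᵢ = γ̇ᵢ(t)`, `ddᵢ = γ̈ᵢ(t)`, `w' = (d/dt) ω(γ̇)(t)`; `(a, b, w)` and
`(A L, B L, C L)` are the frame components of `γ̇(t)` and `∇^L_{γ̇}γ̇(t)`. -/
theorem e11_curvature_limit_nonhorizontal_general
    (g3 d1 d2 d3 dd1 dd2 dd3 w w' : ℝ)
    (hw0 : w ≠ 0)
    (a b : ℝ) (ha : a = d3)
    (hb : b = (Real.sqrt 2 / 2) * (-Real.exp (-g3) * d1 + Real.exp g3 * d2))
    (A B C : ℝ → ℝ)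
    (hA : ∀ L : ℝ, A L = dd3 + (Real.sqrt 2 / 2) * (L + 1)
        * (-Real.exp (-g3) * d1 + Real.exp g3 * d2) * w)
    (hB : ∀ L : ℝ, B L = (Real.sqrt 2 / 2)
        * (dd2 * Real.exp g3 + d2 * d3 * Real.exp g3
            - dd1 * Real.exp (-g3) + d1 * d3 * Real.exp (-g3)) - L * w * d3)
    (hC : ∀ L : ℝ, C L = w' - (Real.sqrt 2 / (2 * L))
        * (-Real.exp (-g3) * d1 + Real.exp g3 * d2) * d3) :
    Tendsto (fun L : ℝ =>
        Real.sqrt ((A L ^ 2 + B L ^ 2 + L * C L ^ 2) / (a ^ 2 + b ^ 2 + L * w ^ 2) ^ 2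
          - (A L * a + B L * b + L * C L * w) ^ 2 / (a ^ 2 + b ^ 2 + L * w ^ 2) ^ 3))
      atTop (nhds (Real.sqrt ((1 / 2) * (-Real.exp (-g3) * d1 + Real.exp g3 * d2) ^ 2
          + d3 ^ 2) / |w|)) := by
  have hA' : ∀ L, A L = A 0 + b * w * L := fun L => by rw [hA, hA, hb]; ring
  have hB' : ∀ L, B L = B 0 + -(w * a) * L := fun L => by rw [hB, hB, ha]; ring
  have hC' : ∀ L, C L = w' + -(a * b) * L⁻¹ := fun L => by rw [hC, ha, hb]; ring
  have hab :
      a ^ 2 + b ^ 2 = (1 / 2) * (-Real.exp (-g3) * d1 + Real.exp g3 * d2) ^ 2 + d3 ^ 2 := by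
    rw [ha, hb, mul_pow, div_pow, Real.sq_sqrt zero_le_two]; ring
  have hlimit : Real.sqrt (((b * w) ^ 2 + (-(w * a)) ^ 2) / w ^ 4)
      = Real.sqrt ((1 / 2) * (-Real.exp (-g3) * d1 + Real.exp g3 * d2) ^ 2 + d3 ^ 2) / |w| := by
    rw [← hab, ← Real.sqrt_sq_eq_abs, ← Real.sqrt_div' _ (sq_nonneg w)]
    congr 1
    field_simp
    ring
  rw [← hlimit]
  show Tendsto (fun L => Real.sqrt (curvatureSq L a b w (A L) (B L) (C L))) atTop _
  rw [funext hA', funext hB', funext hC']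
  exact (tendsto_curvatureSq_atTop hw0 _ _ _ _ _ _).sqrt

/-- Lemma 5.3 (5.5) of the paper.  Let `γ` be a `C²` regular curve in `E(1,1)` with,
at a fixed point `t`, third coordinate `g3`, derivatives `d1,d2,d3`, second derivatives
`dd1,dd2,dd3`, `w = ω(γ̇(t)) = -(√2/2)(e^{-γ₃}γ̇₁ + e^{γ₃}γ̇₂) ≠ 0`, and
`w' = (d/dt)ω(γ̇(t))`.  With frame components `a = γ̇₃`, `b = (√2/2)(-e^{-γ₃}γ̇₁+e^{γ₃}γ̇₂)`,
`c = w` of `γ̇` and components `A L, B L, C L` of `∇^L_{γ̇}γ̇` (Lemma 5.3), the curvature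
`k^L_γ` with respect to `g_L` satisfies
`lim_{L→∞} k^L_γ = √((1/2)(-e^{-γ₃}γ̇₁+e^{γ₃}γ̇₂)² + γ̇₃²)/|w|`. -/
theorem e11_curvature_limit_nonhorizontal
    (g3 d1 d2 d3 dd1 dd2 dd3 w w' : ℝ)
    (hw : w = -(Real.sqrt 2 / 2) * (Real.exp (-g3) * d1 + Real.exp g3 * d2))
    (hreg : ¬(d1 = 0 ∧ d2 = 0 ∧ d3 = 0))
    (hw0 : w ≠ 0)
    (a b : ℝ) (ha : a = d3)
    (hb : b = (Real.sqrt 2 / 2) * (-Real.exp (-g3) * d1 + Real.exp g3 * d2))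
    (A B C : ℝ → ℝ)
    (hA : ∀ L : ℝ, A L = dd3 + (Real.sqrt 2 / 2) * (L + 1)
        * (-Real.exp (-g3) * d1 + Real.exp g3 * d2) * w)
    (hB : ∀ L : ℝ, B L = (Real.sqrt 2 / 2)
        * (dd2 * Real.exp g3 + d2 * d3 * Real.exp g3
            - dd1 * Real.exp (-g3) + d1 * d3 * Real.exp (-g3)) - L * w * d3)
    (hC : ∀ L : ℝ, C L = w' - (Real.sqrt 2 / (2 * L))
        * (-Real.exp (-g3) * d1 + Real.exp g3 * d2) * d3) :
    Tendsto (fun L : ℝ =>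
        Real.sqrt ((A L ^ 2 + B L ^ 2 + L * C L ^ 2) / (a ^ 2 + b ^ 2 + L * w ^ 2) ^ 2
          - (A L * a + B L * b + L * C L * w) ^ 2 / (a ^ 2 + b ^ 2 + L * w ^ 2) ^ 3))
      atTop (nhds (Real.sqrt ((1 / 2) * (-Real.exp (-g3) * d1 + Real.exp g3 * d2) ^ 2
          + d3 ^ 2) / |w|)) :=
  e11_curvature_limit_nonhorizontal_general g3 d1 d2 d3 dd1 dd2 dd3 w w' hw0 a b ha hb A B C hA hB
    hC
end

section
/- Let γ be a C² regular curve in E(1,1) with ω(γ̇(t)) = 0 and d/dt(ω(γ̇(t))) ≠ 0. Then lim_{L→∞} k^L_γ(t)/√L = |d/dt(ω(γ̇(t)))| / ((1/2)(−e^{−γ₃}γ̇₁ + e^{γ₃}γ̇₂)² + γ̇₃²). -/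
/-!
At a horizontal point (`w = 0`) the velocity has no `X₃`-component, so its `g_L`-length
`a² + b²` does not depend on `L`, and the acceleration enters `(k^L)²` only through the
bounded terms `A`, `B` and the term `L · C²` with `C → w'`. Hence `(k^L)² / L → w'² / (a² + b²)²`,
and `a² + b² = ½(-e^{-γ₃}γ̇₁ + e^{γ₃}γ̇₂)² + γ̇₃²`.
-/

open Filter Topology

theorem tendsto_sqrt_div_sqrt_atTop {f : ℝ → ℝ} {ℓ : ℝ}
    (h : Tendsto (fun L => f L / L) atTop (𝓝 ℓ)) :
    Tendsto (fun L => √(f L) / √L) atTop (𝓝 √ℓ) := by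
  refine h.sqrt.congr' ?_
  filter_upwards [eventually_gt_atTop 0] with L hL
  rw [Real.sqrt_div' _ hL.le]

theorem tendsto_horizontal_curvatureSq_div_atTop {A B C : ℝ → ℝ} {α β w' : ℝ} (a b : ℝ)
    (hA : Tendsto A atTop (𝓝 α)) (hB : Tendsto B atTop (𝓝 β)) (hC : Tendsto C atTop (𝓝 w')) :
    Tendsto (fun L => ((A L ^ 2 + B L ^ 2 + L * C L ^ 2) / (a ^ 2 + b ^ 2) ^ 2
        - (A L * a + B L * b) ^ 2 / (a ^ 2 + b ^ 2) ^ 3) / L)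
      atTop (𝓝 (w' ^ 2 / (a ^ 2 + b ^ 2) ^ 2)) := by
  set D := a ^ 2 + b ^ 2
  have hlim : Tendsto (fun L => (A L ^ 2 + B L ^ 2) / D ^ 2 * L⁻¹ + C L ^ 2 / D ^ 2
      - (A L * a + B L * b) ^ 2 / D ^ 3 * L⁻¹) atTop
      (𝓝 ((α ^ 2 + β ^ 2) / D ^ 2 * 0 + w' ^ 2 / D ^ 2 - (α * a + β * b) ^ 2 / D ^ 3 * 0)) :=
    ((((hA.pow 2).add (hB.pow 2)).div_const _).mul tendsto_inv_atTop_zero |>.add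
      ((hC.pow 2).div_const _)).sub
      ((((hA.mul_const a).add (hB.mul_const b)).pow 2 |>.div_const _).mul tendsto_inv_atTop_zero)
  rw [mul_zero, mul_zero, zero_add, sub_zero] at hlim
  refine hlim.congr' ?_
  filter_upwards [eventually_ne_atTop 0] with L hL
  field_simp

theorem e11_curvature_limit_horizontal_general
    (g3 d1 d2 d3 dd1 dd2 dd3 w w' : ℝ)
    (hw0 : w = 0)
    (a b : ℝ) (ha : a = d3)
    (hb : b = (Real.sqrt 2 / 2) * (-Real.exp (-g3) * d1 + Real.exp g3 * d2))
    (A B C : ℝ → ℝ)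
    (hA : ∀ L : ℝ, A L = dd3 + (Real.sqrt 2 / 2) * (L + 1)
        * (-Real.exp (-g3) * d1 + Real.exp g3 * d2) * w)
    (hB : ∀ L : ℝ, B L = (Real.sqrt 2 / 2)
        * (dd2 * Real.exp g3 + d2 * d3 * Real.exp g3
            - dd1 * Real.exp (-g3) + d1 * d3 * Real.exp (-g3)) - L * w * d3)
    (hC : ∀ L : ℝ, C L = w' - (Real.sqrt 2 / (2 * L))
        * (-Real.exp (-g3) * d1 + Real.exp g3 * d2) * d3) :
    Tendsto (fun L : ℝ =>
        Real.sqrt ((A L ^ 2 + B L ^ 2 + L * C L ^ 2) / (a ^ 2 + b ^ 2 + L * w ^ 2) ^ 2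
          - (A L * a + B L * b + L * C L * w) ^ 2 / (a ^ 2 + b ^ 2 + L * w ^ 2) ^ 3)
        / Real.sqrt L)
      atTop (nhds (|w'| / ((1 / 2) * (-Real.exp (-g3) * d1 + Real.exp g3 * d2) ^ 2
          + d3 ^ 2))) := by
  subst hw0
  have hA_lim : Tendsto A atTop (𝓝 dd3) :=
    tendsto_const_nhds.congr fun L => by simp [hA]
  have hB_lim : Tendsto B atTop (𝓝 (B 0)) :=
    tendsto_const_nhds.congr fun L => by simp [hB]
  have hC_lim : Tendsto C atTop (𝓝 w') := by
    have h : Tendsto (fun L : ℝ => √2 / (2 * L)) atTop (𝓝 0) :=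
      tendsto_const_nhds.div_atTop (tendsto_id.const_mul_atTop two_pos)
    have h' := (tendsto_const_nhds (x := w')).sub ((h.mul_const
      (-Real.exp (-g3) * d1 + Real.exp g3 * d2)).mul_const d3)
    rw [zero_mul, zero_mul, sub_zero] at h'
    exact h'.congr fun L => (hC L).symm
  have hD : a ^ 2 + b ^ 2 = (1 / 2) * (-Real.exp (-g3) * d1 + Real.exp g3 * d2) ^ 2 + d3 ^ 2 := by
    rw [ha, hb, mul_pow, div_pow, Real.sq_sqrt zero_le_two]
    ring
  have key := tendsto_sqrt_div_sqrt_atTop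
    (tendsto_horizontal_curvatureSq_div_atTop a b hA_lim hB_lim hC_lim)
  rw [Real.sqrt_div (sq_nonneg _), Real.sqrt_sq_eq_abs, Real.sqrt_sq (by positivity)] at key
  rw [← hD]
  simpa using key

/-- Lemma 5.3 (5.7) of the paper.  Let `γ` be a `C²` regular curve in `E(1,1)` with,
at a fixed point `t`, `ω(γ̇(t)) = 0` and `w' = (d/dt)ω(γ̇(t)) ≠ 0`.  Then
`lim_{L→∞} k^L_γ/√L = |w'| / ((1/2)(-e^{-γ₃}γ̇₁+e^{γ₃}γ̇₂)² + γ̇₃²)`. -/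
theorem e11_curvature_limit_horizontal
    (g3 d1 d2 d3 dd1 dd2 dd3 w w' : ℝ)
    (hw : w = -(Real.sqrt 2 / 2) * (Real.exp (-g3) * d1 + Real.exp g3 * d2))
    (hreg : ¬(d1 = 0 ∧ d2 = 0 ∧ d3 = 0))
    (hw0 : w = 0) (hw' : w' ≠ 0)
    (a b : ℝ) (ha : a = d3)
    (hb : b = (Real.sqrt 2 / 2) * (-Real.exp (-g3) * d1 + Real.exp g3 * d2))
    (A B C : ℝ → ℝ)
    (hA : ∀ L : ℝ, A L = dd3 + (Real.sqrt 2 / 2) * (L + 1)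
        * (-Real.exp (-g3) * d1 + Real.exp g3 * d2) * w)
    (hB : ∀ L : ℝ, B L = (Real.sqrt 2 / 2)
        * (dd2 * Real.exp g3 + d2 * d3 * Real.exp g3
            - dd1 * Real.exp (-g3) + d1 * d3 * Real.exp (-g3)) - L * w * d3)
    (hC : ∀ L : ℝ, C L = w' - (Real.sqrt 2 / (2 * L))
        * (-Real.exp (-g3) * d1 + Real.exp g3 * d2) * d3) :
    Tendsto (fun L : ℝ =>
        Real.sqrt ((A L ^ 2 + B L ^ 2 + L * C L ^ 2) / (a ^ 2 + b ^ 2 + L * w ^ 2) ^ 2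
          - (A L * a + B L * b + L * C L * w) ^ 2 / (a ^ 2 + b ^ 2 + L * w ^ 2) ^ 3)
        / Real.sqrt L)
      atTop (nhds (|w'| / ((1 / 2) * (-Real.exp (-g3) * d1 + Real.exp g3 * d2) ^ 2
          + d3 ^ 2))) :=
  e11_curvature_limit_horizontal_general g3 d1 d2 d3 dd1 dd2 dd3 w w' hw0 a b ha hb A B C hA hB hC
end

section
/- For a C² regular curve γ on a regular surface Σ in the affine group with ω(γ̇(t)) = 0 and d/dt(ω(γ̇(t))) = 0 at t, the signed geodesic curvature satisfies lim_{L→∞} k^{L,s}_{γ,Σ}(t) = 0; indeed ⟨∇^{Σ,L}_{γ̇}γ̇, J_L(γ̇)⟩_{L,Σ} = O(L^{-1/2}) as L → ∞. -/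
/-!
Once `ω(γ̇) = 0` and `ω(γ̇)' = 0`, every term of `⟨∇^{Σ,L}_{γ̇}γ̇, J_L(γ̇)⟩` that grows with `L`
vanishes and what is left is `r̄_L · K · α` for an `L`-independent `K`. Since
`l_L = √(p² + q² + u₃²/L) → √(p² + q²) > 0`, the factor `r̄_L = u₃ / (√L l_L)` is `O(L^{-1/2})`,
while `‖γ̇‖ = |α|` no longer depends on `L`; so the curvature tends to `0`.
-/

open Filter Asymptotics

lemma tendsto_sqrt_add_div_atTop (a b : ℝ) :
    Tendsto (fun L : ℝ => √(a + b / L)) atTop (nhds √a) := by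
  have h : Tendsto (fun L : ℝ => a + b / L) atTop (nhds (a + 0)) :=
    tendsto_const_nhds.add (tendsto_const_nhds.div_atTop tendsto_id)
  rw [add_zero] at h
  exact h.sqrt

lemma tendsto_inv_sqrt_atTop_zero : Tendsto (fun L : ℝ => (√L)⁻¹) atTop (nhds 0) :=
  tendsto_inv_atTop_zero.comp Real.tendsto_sqrt_atTop

lemma isBigO_div_sqrt_div_of_tendsto {f : ℝ → ℝ} {m : ℝ} (hf : Tendsto f atTop (nhds m))
    (hm : m ≠ 0) (c : ℝ) :
    (fun L : ℝ => c / √L / f L) =O[atTop] fun L : ℝ => (√L)⁻¹ := by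
  have hbounded : (fun L : ℝ => c / f L) =O[atTop] fun _ : ℝ => (1 : ℝ) :=
    (tendsto_const_nhds.div hf hm).isBigO_one ℝ
  refine (hbounded.mul (isBigO_refl (fun L : ℝ => (√L)⁻¹) atTop)).congr' ?_ ?_
  · exact Eventually.of_forall fun L => by ring
  · exact Eventually.of_forall fun L => one_mul _

/-- Paper notation: `p, q, u3 = X₁u, X₂u, X₃u`, `l_L = lL L`, `r̄_L = rbL L`, `p̄ = pb`, `q̄ = qb`;
`g1 = γ₁`, `d1, d2` and `dd1, dd3` are components of `γ̇` and `γ̈`, `w = ω(γ̇)`, `w' = (ω(γ̇))'`;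
`A L, B L, C` and `c1 L, c2 L` are the ambient and frame components of `∇^{Σ,L}_{γ̇}γ̇`, and
`γ̇ = α e₁ - (l_L/l)√L w e₂`. -/
theorem affine_signed_geodesic_curvature_limit_horizontal_general
    (p q u3 g1 d1 d2 dd1 dd3 w w' : ℝ)
    (hpq : 0 < p ^ 2 + q ^ 2)
    (l pb qb : ℝ)
    (lL rbL : ℝ → ℝ)
    (hlL : ∀ L : ℝ, lL L = Real.sqrt (p ^ 2 + q ^ 2 + u3 ^ 2 / L))
    (hrbL : ∀ L : ℝ, rbL L = (u3 / Real.sqrt L) / lL L)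
    (hw0 : w = 0) (hw' : w' = 0)
    (α : ℝ)
    (A B : ℝ → ℝ) (C : ℝ)
    (hA : ∀ L : ℝ, A L = (dd1 * g1 - d1 ^ 2) / g1 ^ 2 + L * w * (d2 / g1))
    (hB : ∀ L : ℝ, B L = dd3 - L * w * (d1 / g1))
    (hC : C = w' - w * (d1 / g1))
    (c1 c2 : ℝ → ℝ)
    (hc2 : ∀ L : ℝ, c2 L = rbL L * pb * A L + rbL L * qb * B L
        - (l / lL L) * Real.sqrt L * C) :
    Tendsto (fun L : ℝ =>
        (c1 L * ((lL L / l) * Real.sqrt L * w) + c2 L * α)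
          / (Real.sqrt (α ^ 2 + (lL L / l) ^ 2 * L * w ^ 2)) ^ 3)
      atTop (nhds 0) ∧
    (fun L : ℝ => c1 L * ((lL L / l) * Real.sqrt L * w) + c2 L * α)
      =O[atTop] (fun L : ℝ => (Real.sqrt L)⁻¹) := by
  subst hw0 hw'
  have hnumerator : ∀ L : ℝ, c1 L * ((lL L / l) * √L * 0) + c2 L * α
      = (pb * ((dd1 * g1 - d1 ^ 2) / g1 ^ 2) + qb * dd3) * α * rbL L := by
    intro L
    rw [hc2, hA, hB, hC]
    ring
  have hrbL_isBigO : rbL =O[atTop] fun L : ℝ => (√L)⁻¹ := by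
    have h := isBigO_div_sqrt_div_of_tendsto (tendsto_sqrt_add_div_atTop (p ^ 2 + q ^ 2) (u3 ^ 2))
      (Real.sqrt_pos.2 hpq).ne' u3
    simpa only [← hlL, ← hrbL] using h
  have hisBigO : (fun L : ℝ => c1 L * ((lL L / l) * √L * 0) + c2 L * α)
      =O[atTop] fun L : ℝ => (√L)⁻¹ := by
    simpa only [hnumerator] using hrbL_isBigO.const_mul_left _
  refine ⟨?_, hisBigO⟩
  have hspeed : ∀ L : ℝ, α ^ 2 + (lL L / l) ^ 2 * L * 0 ^ 2 = α ^ 2 := fun L => by ring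
  simpa only [hspeed, zero_div] using
    (hisBigO.trans_tendsto tendsto_inv_sqrt_atTop_zero).div_const (√(α ^ 2) ^ 3)

/-- Lemma 3.6, horizontal case, of the paper.  Let `Σ = {u = 0}` be a regular surface in the affine
group away from characteristic points, with `p = X1u`, `q = X2u`, `u3 = X3u`,
`l = √(p²+q²) > 0`, `l_L(L) = √(p²+q²+u3²/L)`, `r̄_L(L) = (u3/√L)/l_L(L)`,
`p̄ = p/l`, `q̄ = q/l`.  Let `γ` be a `C²` regular curve on `Σ` with curve data
`g1 = γ₁ > 0`, derivatives `d1,d2,d3`, second derivatives `dd1,dd3`,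
`w = ω(γ̇(t)) = d2/g1 - d3 = 0` and `w' = (d/dt)ω(γ̇(t)) = 0`.  With
`α = q̄(γ̇₁/γ₁) - p̄γ̇₃` (so `γ̇ = α e1 - (l_L/l)√L w e2`), ambient covariant derivative
components `A L, B L, C`, and `∇^{Σ,L}_{γ̇}γ̇` frame components
`c1 L = q̄ A L - p̄ B L`, `c2 L = r̄_L p̄ A L + r̄_L q̄ B L - (l/l_L)√L C`, the signed
geodesic curvature `k^{L,s}_{γ,Σ} = ⟨∇^{Σ,L}_{γ̇}γ̇, J_L(γ̇)⟩/‖γ̇‖³` tends to `0` as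
`L → ∞`; indeed `⟨∇^{Σ,L}_{γ̇}γ̇, J_L(γ̇)⟩ = O(L^{-1/2})` as `L → ∞`. -/
theorem affine_signed_geodesic_curvature_limit_horizontal
    (p q u3 g1 d1 d2 d3 dd1 dd3 w w' : ℝ)
    (hpq : 0 < p ^ 2 + q ^ 2) (hg1 : 0 < g1)
    (l pb qb : ℝ) (hl : l = Real.sqrt (p ^ 2 + q ^ 2))
    (hpb : pb = p / l) (hqb : qb = q / l)
    (lL rbL : ℝ → ℝ)
    (hlL : ∀ L : ℝ, lL L = Real.sqrt (p ^ 2 + q ^ 2 + u3 ^ 2 / L))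
    (hrbL : ∀ L : ℝ, rbL L = (u3 / Real.sqrt L) / lL L)
    (hw : w = d2 / g1 - d3) (hw0 : w = 0) (hw' : w' = 0)
    (α : ℝ) (hα : α = qb * (d1 / g1) - pb * d3)
    (A B : ℝ → ℝ) (C : ℝ)
    (hA : ∀ L : ℝ, A L = (dd1 * g1 - d1 ^ 2) / g1 ^ 2 + L * w * (d2 / g1))
    (hB : ∀ L : ℝ, B L = dd3 - L * w * (d1 / g1))
    (hC : C = w' - w * (d1 / g1))
    (c1 c2 : ℝ → ℝ)
    (hc1 : ∀ L : ℝ, c1 L = qb * A L - pb * B L)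
    (hc2 : ∀ L : ℝ, c2 L = rbL L * pb * A L + rbL L * qb * B L
        - (l / lL L) * Real.sqrt L * C)
    (hα0 : α ≠ 0) :
    Tendsto (fun L : ℝ =>
        (c1 L * ((lL L / l) * Real.sqrt L * w) + c2 L * α)
          / (Real.sqrt (α ^ 2 + (lL L / l) ^ 2 * L * w ^ 2)) ^ 3)
      atTop (nhds 0) ∧
    (fun L : ℝ => c1 L * ((lL L / l) * Real.sqrt L * w) + c2 L * α)
      =O[atTop] (fun L : ℝ => (Real.sqrt L)⁻¹) :=
  affine_signed_geodesic_curvature_limit_horizontal_general p q u3 g1 d1 d2 dd1 dd3 w w' hpq l pb qb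
    lL rbL hlL hrbL hw0 hw' α A B C hA hB hC c1 c2 hc2
end
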